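/- Let k ≥ 2 and let G be a (C4, K_{1,k})-co-critical graph with a critical coloring. Then every edge uv of G satisfies |N(u) ∩ N(v)| ≤ 2k−1; that is, no edge lies in 2k or more triangles. -/

import Mathlib

/-!
A common neighbour `w` of `u` and `v` is joined to `u` or to `v` by a blue edge (fewer than `k`
choices each) or to both by red edges; two red such `w`, `w'` would close the red 4-cycle
`u w v w'`. Hence there are at most `(k - 1) + (k - 1) + 1` common neighbours.
-/

open SimpleGraph

/-- A graph contains a 4-cycle. -/
def HasC4 {V : Type*} (G : SimpleGraph V) : Prop :=
  ∃ a b c d : V, a ≠ b ∧ a ≠ c ∧ a ≠ d ∧ b ≠ c ∧ b ≠ d ∧ c ≠ d ∧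
    G.Adj a b ∧ G.Adj b c ∧ G.Adj c d ∧ G.Adj d a

/-- A critical coloring of `G` (for the pair `(C₄, K_{1,k})`) given by its red subgraph `R`:
the blue subgraph is `G \ R`; there is no red `C₄` and no blue `K_{1,k}`. -/
def CriticalColoring {V : Type*} (k : ℕ) (G R : SimpleGraph V) : Prop :=
  R ≤ G ∧ ¬ HasC4 R ∧ ∀ v : V, ((G \ R).neighborSet v).ncard < k

/-- `G` is `(C₄, K_{1,k})`-co-critical. -/
def CoCritical {V : Type*} (k : ℕ) (G : SimpleGraph V) : Prop :=
  G ≠ ⊤ ∧ (∃ R : SimpleGraph V, CriticalColoring k G R) ∧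
    ∀ u v : V, u ≠ v → ¬ G.Adj u v →
      ¬ ∃ R : SimpleGraph V, CriticalColoring k (G ⊔ fromEdgeSet {s(u, v)}) R

theorem ncard_commonNeighbors_le_one_of_not_hasC4 {V : Type*} {R : SimpleGraph V} {u v : V}
    (hR : ¬ HasC4 R) (huv : u ≠ v) : (R.commonNeighbors u v).ncard ≤ 1 := by
  by_contra! h
  obtain ⟨⟨a, ⟨hua, hva⟩, b, ⟨hub, hvb⟩, hab⟩, -⟩ := Set.one_lt_ncard_iff_nontrivial_and_finite.mp h
  exact hR ⟨u, a, v, b, hua.ne, huv, hub.ne, hva.ne', hab, hvb.ne, hua, hva.symm, hvb, hub.symm⟩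

theorem commonNeighbors_subset_sdiff_union {V : Type*} (G R : SimpleGraph V) (u v : V) :
    G.commonNeighbors u v ⊆
      (G \ R).neighborSet u ∪ (G \ R).neighborSet v ∪ R.commonNeighbors u v := by
  rintro w ⟨hGu, hGv⟩
  by_cases hRu : R.Adj u w
  · by_cases hRv : R.Adj v w
    · exact Or.inr ⟨hRu, hRv⟩
    · exact Or.inl (Or.inr ⟨hGv, hRv⟩)
  · exact Or.inl (Or.inl ⟨hGu, hRu⟩)

theorem stmt6_general {V : Type*} [Fintype V] (k : ℕ) (G : SimpleGraph V)
    (R : SimpleGraph V) (hτ : CriticalColoring k G R)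
    (u v : V) (huv : G.Adj u v) :
    (G.neighborSet u ∩ G.neighborSet v).ncard ≤ 2 * k - 1 := by
  obtain ⟨-, hC4, hblue⟩ := hτ
  have hred := ncard_commonNeighbors_le_one_of_not_hasC4 hC4 huv.ne
  have hu := hblue u
  have hv := hblue v
  calc (G.commonNeighbors u v).ncard
      ≤ ((G \ R).neighborSet u ∪ (G \ R).neighborSet v ∪ R.commonNeighbors u v).ncard :=
        Set.ncard_le_ncard (commonNeighbors_subset_sdiff_union G R u v)
    _ ≤ ((G \ R).neighborSet u).ncard + ((G \ R).neighborSet v).ncard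
          + (R.commonNeighbors u v).ncard :=
        (Set.ncard_union_le _ _).trans (Nat.add_le_add_right (Set.ncard_union_le _ _) _)
    _ ≤ 2 * k - 1 := by omega

theorem stmt6 {V : Type*} [Fintype V] (k : ℕ) (hk : 2 ≤ k) (G : SimpleGraph V)
    (hG : CoCritical k G) (R : SimpleGraph V) (hτ : CriticalColoring k G R)
    (u v : V) (huv : G.Adj u v) :
    (G.neighborSet u ∩ G.neighborSet v).ncard ≤ 2 * k - 1 :=
  stmt6_general k G R hτ u v huv
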